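/- arXiv:1301.1153 — 4 statements merged into one kernel-verified Lean document; each statement's English description precedes it below -/
import Mathlib

section
/- Let v_1,…,v_n be gross substitute integer-valued valuations on a finite set Ω, let p* be a pointwise-minimal optimal price vector (p* minimizes the Lyapunov function L over all integer price vectors and is pointwise minimal among the minimizers), and let p ≤ p* be an integer price vector such that f_p(S) ≤ 0 for every set S ⊆ Ω. Then L(p) ≤ L(p*); in particular p is also optimal. -/
open Finset

noncomputable section

variable {Ω : Type*}

/-- The utility of a set `S` under valuation `v` and price vector `p`. -/
def util (v : Finset Ω → ℝ) (p : Ω → ℝ) (S : Finset Ω) : ℝ := v S - ∑ j ∈ S, p j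

/-- The demand set: all sets maximizing utility. -/
def Demand (v : Finset Ω → ℝ) (p : Ω → ℝ) : Set (Finset Ω) :=
  {S | ∀ T : Finset Ω, util v p T ≤ util v p S}

/-- The minimal demand sets: demand sets all of whose proper subsets have strictly
smaller utility. -/
def DemandMin (v : Finset Ω → ℝ) (p : Ω → ℝ) : Set (Finset Ω) :=
  {S | S ∈ Demand v p ∧ ∀ T : Finset Ω, T ⊂ S → util v p T < util v p S}

/-- The maximum utility of a player. -/
def maxUtil [Fintype Ω] (v : Finset Ω → ℝ) (p : Ω → ℝ) : ℝ :=
  Finset.univ.sup' Finset.univ_nonempty (util v p)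

/-- A valuation: zero on the empty set and monotone under inclusion. -/
def IsValuation (v : Finset Ω → ℝ) : Prop :=
  v ∅ = 0 ∧ ∀ S T : Finset Ω, S ⊆ T → v S ≤ v T

/-- Gross substitutes: if prices (weakly) increase, there is a demanded set containing
all previously demanded items whose price did not change. -/
def GrossSubstitute (v : Finset Ω → ℝ) : Prop :=
  ∀ p q : Ω → ℝ, (∀ j, 0 ≤ p j) → (∀ j, p j ≤ q j) →
    ∀ S ∈ Demand v p, ∃ S' ∈ Demand v q, ∀ j ∈ S, p j = q j → j ∈ S'

/-- `GGS k M`: the `(k,M)`-truncations of gross substitute valuations. -/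
def GGS (k : ℕ) (M : ℝ) (v : Finset Ω → ℝ) : Prop :=
  ∃ g : Finset Ω → ℝ, IsValuation g ∧ GrossSubstitute g ∧
    (∀ S : Finset Ω, S.card < k → v S = g S ∧ g S ≤ M) ∧
    (∀ S : Finset Ω, k ≤ S.card → v S = M ∧ M ≤ g S)

/-- `f_{v,p}(S) = min_{D ∈ D*_v(p)} |D ∩ S|`. -/
def fMin [DecidableEq Ω] (v : Finset Ω → ℝ) (p : Ω → ℝ) (S : Finset Ω) : ℕ :=
  sInf ((fun D => (D ∩ S).card) '' DemandMin v p)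

/-- `f_p(S) = (Σ_i f_{i,p}(S)) − |S|`. -/
def fTot [DecidableEq Ω] {n : ℕ} (v : Fin n → Finset Ω → ℝ) (p : Ω → ℝ) (S : Finset Ω) : ℤ :=
  (∑ i, (fMin (v i) p S : ℤ)) - S.card

/-- The Lyapunov function `L(p) = Σ_i u_{i,p} + Σ_j p(j)`. -/
def Lyap [Fintype Ω] {n : ℕ} (v : Fin n → Finset Ω → ℝ) (p : Ω → ℝ) : ℝ :=
  (∑ i, maxUtil (v i) p) + ∑ j, p j

/-- An envy-free allocation: pairwise disjoint sets, each demanded by its player. -/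
def EnvyFree {n : ℕ} (v : Fin n → Finset Ω → ℝ) (p : Ω → ℝ) (A : Fin n → Finset Ω) : Prop :=
  (∀ i j, i ≠ j → Disjoint (A i) (A j)) ∧ ∀ i, A i ∈ Demand (v i) p

/-- A Walrasian allocation: envy-free, and every unallocated item has price zero. -/
def Walrasian {n : ℕ} (v : Fin n → Finset Ω → ℝ) (p : Ω → ℝ) (A : Fin n → Finset Ω) : Prop :=
  EnvyFree v p A ∧ ∀ x : Ω, (∀ i, x ∉ A i) → p x = 0

/-- `addInd p S = p + 1_S`: increase the price of every item of `S` by one. -/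
def addInd [DecidableEq Ω] (p : Ω → ℝ) (S : Finset Ω) : Ω → ℝ :=
  fun j => p j + if j ∈ S then 1 else 0

/-- An integer price vector. -/
def IsIntVec (p : Ω → ℝ) : Prop := ∀ j, ∃ z : ℤ, p j = z

/-- An integer-valued valuation. -/
def IsIntVal (v : Finset Ω → ℝ) : Prop := ∀ S : Finset Ω, ∃ z : ℤ, v S = z

/-- A small player: every demanded set is a singleton. -/
def SmallPlayer (v : Finset Ω → ℝ) (p : Ω → ℝ) : Prop :=
  ∀ S ∈ Demand v p, ∃ x, S = {x}

set_option linter.unusedSectionVars false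
set_option linter.unusedTactic false

namespace GSAux

variable {Ω : Type*} [Fintype Ω] [DecidableEq Ω]

attribute [local instance] Classical.propDecidable

lemma mem_demand {v : Finset Ω → ℝ} {p : Ω → ℝ} {S : Finset Ω} :
    S ∈ Demand v p ↔ ∀ T, util v p T ≤ util v p S := Iff.rfl

lemma demand_nonempty (v : Finset Ω → ℝ) (p : Ω → ℝ) : ∃ D, D ∈ Demand v p := by
  obtain ⟨D, -, hD⟩ := Finset.exists_max_image (Finset.univ : Finset (Finset Ω)) (util v p)
    ⟨∅, Finset.mem_univ _⟩
  exact ⟨D, fun T => hD T (Finset.mem_univ T)⟩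

lemma util_int {v : Finset Ω → ℝ} {p : Ω → ℝ} (hvi : IsIntVal v) (hpi : IsIntVec p)
    (S : Finset Ω) : ∃ z : ℤ, util v p S = (z : ℝ) := by
  obtain ⟨zv, hzv⟩ := hvi S
  choose zp hzp using hpi
  refine ⟨zv - ∑ j ∈ S, zp j, ?_⟩
  unfold util
  rw [hzv, show ∑ j ∈ S, p j = ∑ j ∈ S, ((zp j : ℝ)) from Finset.sum_congr rfl fun j _ => hzp j]
  push_cast
  ring

lemma int_le_of_lt_add_one {a b : ℝ} (ha : ∃ z : ℤ, a = (z:ℝ)) (hb : ∃ z : ℤ, b = (z:ℝ))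
    (h : b < a + 1) : b ≤ a := by
  obtain ⟨x, rfl⟩ := ha; obtain ⟨y, rfl⟩ := hb
  have : y < x + 1 := by exact_mod_cast h
  exact_mod_cast Int.lt_add_one_iff.mp this

lemma int_le_sub_one_of_lt {a b : ℝ} (ha : ∃ z : ℤ, a = (z:ℝ)) (hb : ∃ z : ℤ, b = (z:ℝ))
    (h : b < a) : b ≤ a - 1 := by
  obtain ⟨x, rfl⟩ := ha; obtain ⟨y, rfl⟩ := hb
  have : y < x := by exact_mod_cast h
  have h2 : y ≤ x - 1 := by omega
  have : ((y:ℝ)) ≤ ((x:ℝ)) - 1 := by exact_mod_cast h2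
  linarith

lemma sum_ind (Z W : Finset Ω) (c : ℝ) :
    ∑ j ∈ Z, (if j ∈ W then c else 0) = c * (Z ∩ W).card := by
  rw [← Finset.sum_filter, Finset.filter_mem_eq_inter, Finset.sum_const, nsmul_eq_mul, mul_comm]

lemma sum_out (Z U : Finset Ω) (c : ℝ) :
    ∑ j ∈ Z, (if j ∈ U then 0 else c) = c * (Z \ U).card := by
  have h : ∀ j, (if j ∈ U then (0:ℝ) else c) = (if j ∉ U then c else 0) := fun j => by
    by_cases hj : j ∈ U <;> simp [hj]
  simp_rw [h]
  rw [← Finset.sum_filter, ← Finset.sdiff_eq_filter, Finset.sum_const, nsmul_eq_mul, mul_comm]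

lemma sum_single (Z : Finset Ω) (x : Ω) (c : ℝ) :
    ∑ j ∈ Z, (if j = x then c else 0) = if x ∈ Z then c else 0 :=
  Finset.sum_ite_eq' Z x (fun _ => c)

lemma util_shift (v : Finset Ω → ℝ) (p : Ω → ℝ) (U W : Finset Ω) (x : Ω) (a b c : ℝ)
    (Z : Finset Ω) :
    util v (fun j => p j + ((if j ∈ U then 0 else a) + (if j = x then b else 0) +
      (if j ∈ W then c else 0))) Z
    = util v p Z - (a * ((Z \ U).card : ℝ) + (if x ∈ Z then b else 0)
        + c * ((Z ∩ W).card : ℝ)) := by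
  unfold util
  rw [Finset.sum_add_distrib, Finset.sum_add_distrib, Finset.sum_add_distrib,
    sum_out, sum_single, sum_ind]
  ring

lemma maxutil_eq {v : Finset Ω → ℝ} {p : Ω → ℝ} {D : Finset Ω} (hD : D ∈ Demand v p) :
    maxUtil v p = util v p D :=
  le_antisymm (Finset.sup'_le _ _ fun T _ => hD T) (Finset.le_sup' _ (Finset.mem_univ D))

lemma util_le_maxutil (v : Finset Ω → ℝ) (p : Ω → ℝ) (T : Finset Ω) :
    util v p T ≤ maxUtil v p := Finset.le_sup' _ (Finset.mem_univ T)

lemma demandmin_nonempty (v : Finset Ω → ℝ) (p : Ω → ℝ) : ∃ Z, Z ∈ DemandMin v p := by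
  obtain ⟨D₀, hD₀⟩ := demand_nonempty v p
  obtain ⟨Z, hZmem, hZmin⟩ := Finset.exists_min_image
    (Finset.univ.filter (fun Z => Z ∈ Demand v p)) (fun Z => Z.card)
    ⟨D₀, Finset.mem_filter.mpr ⟨Finset.mem_univ _, hD₀⟩⟩
  have hZD : Z ∈ Demand v p := (Finset.mem_filter.mp hZmem).2
  refine ⟨Z, hZD, fun T hT => ?_⟩
  by_contra hcon
  push_neg at hcon
  have hTD : T ∈ Demand v p := fun T' => le_trans (hZD T') hcon
  have := hZmin T (Finset.mem_filter.mpr ⟨Finset.mem_univ _, hTD⟩)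
  exact absurd (Finset.card_lt_card hT) (not_lt.mpr this)

lemma fmin_witness (v : Finset Ω → ℝ) (p : Ω → ℝ) (S : Finset Ω) :
    ∃ Z ∈ Demand v p, (Z ∩ S).card = fMin v p S := by
  obtain ⟨Z₀, hZ₀⟩ := demandmin_nonempty v p
  have hne : ((fun D => (D ∩ S).card) '' DemandMin v p).Nonempty :=
    ⟨_, Set.mem_image_of_mem _ hZ₀⟩
  have hmem := Nat.sInf_mem hne
  obtain ⟨Z, hZ, hZc⟩ := hmem
  exact ⟨Z, hZ.1, hZc⟩

end GSAux
namespace GSAux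

variable {Ω : Type*} [Fintype Ω] [DecidableEq Ω]

set_option maxHeartbeats 1000000 in
lemma core {v : Finset Ω → ℝ} {p : Ω → ℝ}
    (hgs : GrossSubstitute v) (hvi : IsIntVal v) (hpi : IsIntVec p) (hp : ∀ j, 0 ≤ p j)
    {A B : Finset Ω} (hA : A ∈ Demand v p) (hB : B ∈ Demand v p)
    {x : Ω} (hxA : x ∈ A) (hxB : x ∉ B)
    (W : Finset Ω) (hWcard : W.card ≤ 1) (hWx : x ∉ W) (hWA : ∀ w ∈ W, w ∉ A)
    (hWU : W ⊆ A ∪ B) :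
    ∃ K ∈ Demand v p, A.erase x ⊆ K ∧ K ⊆ (A ∪ B).erase x ∧
      ((∃ Z ∈ Demand v p, Z ⊆ (A ∪ B).erase x ∧ ∀ w ∈ W, w ∉ Z) → ∀ w ∈ W, w ∉ K) := by
  classical
  set U : Finset Ω := A ∪ B with hUdef
  set q : Ω → ℝ := fun j => p j + ((if j ∈ U then 0 else 2) + (if j = x then (1:ℝ)/2 else 0) +
    (if j ∈ W then (1:ℝ)/4 else 0)) with hqdef
  have hq : ∀ Z : Finset Ω, util v q Z
      = util v p Z - (2 * ((Z \ U).card : ℝ) + (if x ∈ Z then (1:ℝ)/2 else 0)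
        + (1/4) * ((Z ∩ W).card : ℝ)) := fun Z => util_shift v p U W x 2 (1/2) (1/4) Z
  have hpq : ∀ j, p j ≤ q j := by
    intro j
    have h1 : (0:ℝ) ≤ (if j ∈ U then (0:ℝ) else 2) := by split <;> norm_num
    have h2 : (0:ℝ) ≤ (if j = x then (1:ℝ)/2 else 0) := by split <;> norm_num
    have h3 : (0:ℝ) ≤ (if j ∈ W then (1:ℝ)/4 else 0) := by split <;> norm_num
    simp only [hqdef]
    linarith
  obtain ⟨K, hKq, hKcont⟩ := hgs p q hp hpq A hA
  set u : ℝ := util v p A with hudef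
  have huB : util v p B = u := le_antisymm (hA B) (hB A)
  have hut : ∀ T, util v p T ≤ u := hA
  have huint : ∃ z : ℤ, u = (z:ℝ) := util_int hvi hpi A
  have hBq : u - 1/4 ≤ util v q B := by
    have hBU : ((B \ U).card : ℝ) = 0 := by
      rw [Finset.sdiff_eq_empty_iff_subset.mpr Finset.subset_union_right]
      simp
    have hBW : ((B ∩ W).card : ℝ) ≤ 1 := by
      have h := Finset.card_le_card (Finset.inter_subset_right : B ∩ W ⊆ W)
      exact_mod_cast le_trans h hWcard
    rw [hq B, hBU, if_neg hxB, huB]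
    linarith
  have hKlow : u - 1/4 ≤ util v q K := le_trans hBq (hKq B)
  have hKU : K ⊆ U := by
    by_contra hc
    obtain ⟨j, hjK, hjU⟩ := Finset.not_subset.mp hc
    have h1 : (1:ℝ) ≤ ((K \ U).card : ℝ) := by
      have h0 : 0 < (K \ U).card := Finset.card_pos.mpr ⟨j, Finset.mem_sdiff.mpr ⟨hjK, hjU⟩⟩
      exact_mod_cast h0
    have h2 := hq K
    have h3 : util v p K ≤ u := hut K
    have h4 : (0:ℝ) ≤ (if x ∈ K then (1:ℝ)/2 else 0) := by split <;> norm_num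
    have h5 : (0:ℝ) ≤ (1/4) * ((K ∩ W).card : ℝ) := by positivity
    linarith
  have hxK : x ∉ K := by
    intro hxK
    have h2 := hq K
    rw [if_pos hxK] at h2
    have h3 : util v p K ≤ u := hut K
    have h5 : (0:ℝ) ≤ (1/4) * ((K ∩ W).card : ℝ) := mul_nonneg (by norm_num) (Nat.cast_nonneg _)
    have h6 : (0:ℝ) ≤ 2 * ((K \ U).card : ℝ) := mul_nonneg (by norm_num) (Nat.cast_nonneg _)
    linarith
  have hKU0 : ((K \ U).card : ℝ) = 0 := by
    rw [Finset.sdiff_eq_empty_iff_subset.mpr hKU]; simp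
  have hKputil : util v p K = util v q K + (1/4) * ((K ∩ W).card : ℝ) := by
    have h2 := hq K
    rw [if_neg hxK, hKU0] at h2
    linarith
  have hKpu : util v p K = u := by
    have h5 : (0:ℝ) ≤ (1/4) * ((K ∩ W).card : ℝ) := mul_nonneg (by norm_num) (Nat.cast_nonneg _)
    have hge : u - 1/4 ≤ util v p K := by linarith
    have hKint := util_int hvi hpi K
    have h6 : u < util v p K + 1 := by linarith
    exact le_antisymm (hut K) (int_le_of_lt_add_one hKint huint h6)
  have hKDem : K ∈ Demand v p := fun T => le_trans (hut T) (le_of_eq hKpu.symm)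
  refine ⟨K, hKDem, ?_, ?_, ?_⟩
  · intro j hj
    have hjA := Finset.mem_of_mem_erase hj
    have hjx := Finset.ne_of_mem_erase hj
    refine hKcont j hjA ?_
    have hjU : j ∈ U := Finset.mem_union_left _ hjA
    have hjW : j ∉ W := fun h => hWA j h hjA
    simp only [hqdef, if_pos hjU, if_neg hjx, if_neg hjW]
    ring
  · intro j hjK
    exact Finset.mem_erase.mpr ⟨fun h => hxK (h ▸ hjK), hKU hjK⟩
  · rintro ⟨Z, hZD, hZU, hZW⟩ w hwW hwK
    have hZsubU : Z ⊆ U := fun a ha => Finset.mem_of_mem_erase (hZU ha)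
    have hxZ : x ∉ Z := fun h => (Finset.mem_erase.mp (hZU h)).1 rfl
    have hZ0 : ((Z \ U).card : ℝ) = 0 := by
      rw [Finset.sdiff_eq_empty_iff_subset.mpr hZsubU]; simp
    have hZW0 : ((Z ∩ W).card : ℝ) = 0 := by
      have : Z ∩ W = ∅ := by
        rw [Finset.eq_empty_iff_forall_notMem]
        intro a ha
        exact hZW a (Finset.mem_inter.mp ha).2 (Finset.mem_inter.mp ha).1
      rw [this]; simp
    have hZpu : util v p Z = u := le_antisymm (hut Z) (hZD A)
    have hZq : util v q Z = u := by rw [hq Z, hZ0, if_neg hxZ, hZW0, hZpu]; ring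
    have h1 : (1:ℝ) ≤ ((K ∩ W).card : ℝ) := by
      have h0 : 0 < (K ∩ W).card := Finset.card_pos.mpr ⟨w, Finset.mem_inter.mpr ⟨hwK, hwW⟩⟩
      exact_mod_cast h0
    have h3 : util v q Z ≤ util v q K := hKq Z
    have h4 : util v p K ≤ u := hut K
    linarith

end GSAux
namespace GSAux

variable {Ω : Type*} [Fintype Ω] [DecidableEq Ω]

set_option maxHeartbeats 1000000 in
lemma nocomp {v : Finset Ω → ℝ} {p : Ω → ℝ}
    (hgs : GrossSubstitute v) (hvi : IsIntVal v) (hpi : IsIntVec p) (hp : ∀ j, 0 ≤ p j)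
    {A A₁ U : Finset Ω} {x z y : Ω}
    (hA : A ∈ Demand v p) (hA₁ : A₁ ∈ Demand v p)
    (hxA : x ∈ A) (hxA₁ : x ∉ A₁) (hAU : A ⊆ U) (hA₁U : A₁ ⊆ U)
    (hzy : z ≠ y) (hzU : z ∈ U) (hzA : z ∉ A) (hyU : y ∈ U) (hyA : y ∉ A)
    (hall : ∀ Z ∈ Demand v p, Z ⊆ U → x ∉ Z → z ∈ Z ∧ y ∈ Z) : False := by
  classical
  set C : Finset Ω := U \ A with hCdef
  have hzC : z ∈ C := Finset.mem_sdiff.mpr ⟨hzU, hzA⟩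
  have hyC : y ∈ C := Finset.mem_sdiff.mpr ⟨hyU, hyA⟩
  set δ : ℝ := 1 / (2 * ((C.card : ℝ) + 1)) with hδdef
  have hc0 : (0:ℝ) ≤ (C.card : ℝ) := Nat.cast_nonneg _
  have hδpos : 0 < δ := by rw [hδdef]; positivity
  have hδhalf : δ ≤ 1/2 := by
    rw [hδdef]
    rw [div_le_div_iff₀ (by positivity) (by norm_num)]
    linarith
  have hδC : δ * ((C.card : ℝ)) ≤ 1/2 := by
    rw [hδdef, div_mul_eq_mul_div, div_le_div_iff₀ (by positivity) (by norm_num)]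
    linarith
  set s : Finset (Finset Ω) :=
    Finset.univ.filter (fun Z => Z ∈ Demand v p ∧ Z ⊆ U ∧ x ∉ Z) with hsdef
  have hsne : s.Nonempty :=
    ⟨A₁, Finset.mem_filter.mpr ⟨Finset.mem_univ _, hA₁, hA₁U, hxA₁⟩⟩
  obtain ⟨Z₀, hZ₀s, hZ₀min⟩ := Finset.exists_min_image s (fun Z => (Z ∩ C).card) hsne
  obtain ⟨-, hZ₀D, hZ₀U, hxZ₀⟩ := Finset.mem_filter.mp hZ₀s
  obtain ⟨hzZ₀, hyZ₀⟩ := hall Z₀ hZ₀D hZ₀U hxZ₀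
  set u : ℝ := util v p A with hudef
  have hut : ∀ T, util v p T ≤ u := hA
  have huint := util_int hvi hpi A
  have huZ₀ : util v p Z₀ = u := le_antisymm (hut Z₀) (hZ₀D A)
  set P : Ω → ℝ := fun j => p j + ((if j ∈ U then 0 else 2) + (if j = x then 1 - δ else 0)
    + (if j ∈ C then δ else 0)) with hPdef
  have hPq : ∀ Z, util v P Z = util v p Z - (2*((Z\U).card:ℝ)
      + (if x ∈ Z then 1-δ else 0) + δ*((Z∩C).card:ℝ)) :=
    fun Z => util_shift v p U C x 2 (1-δ) δ Z
  have hpP : ∀ j, p j ≤ P j := by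
    intro j
    have h1 : (0:ℝ) ≤ (if j ∈ U then (0:ℝ) else 2) := by split <;> norm_num
    have h2 : (0:ℝ) ≤ (if j = x then 1-δ else 0) := by split <;> [linarith; norm_num]
    have h3 : (0:ℝ) ≤ (if j ∈ C then δ else 0) := by split <;> [linarith; norm_num]
    simp only [hPdef]
    linarith
  have hP0 : ∀ j, 0 ≤ P j := fun j => le_trans (hp j) (hpP j)
  have hZ₀Ccard : δ * ((Z₀ ∩ C).card : ℝ) ≤ 1/2 := by
    have h1 : ((Z₀ ∩ C).card : ℝ) ≤ (C.card : ℝ) := by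
      exact_mod_cast Finset.card_le_card (Finset.inter_subset_right : Z₀ ∩ C ⊆ C)
    nlinarith
  have hZ₀P : Z₀ ∈ Demand v P := by
    intro T
    have hZ₀0 : ((Z₀ \ U).card : ℝ) = 0 := by
      rw [Finset.sdiff_eq_empty_iff_subset.mpr hZ₀U]; simp
    rw [hPq T, hPq Z₀, hZ₀0, if_neg hxZ₀, huZ₀]
    have hTnn1 : (0:ℝ) ≤ 2*((T\U).card:ℝ) := mul_nonneg (by norm_num) (Nat.cast_nonneg _)
    have hTnn2 : (0:ℝ) ≤ δ*((T∩C).card:ℝ) := mul_nonneg hδpos.le (Nat.cast_nonneg _)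
    by_cases hTD : T ∈ Demand v p
    · by_cases hTU : T ⊆ U
      · by_cases hxT : x ∈ T
        · rw [if_pos hxT]
          have h1 : util v p T ≤ u := hut T
          linarith
        · rw [if_neg hxT]
          have hTs : T ∈ s := Finset.mem_filter.mpr ⟨Finset.mem_univ _, hTD, hTU, hxT⟩
          have hmin := hZ₀min T hTs
          have h1 : util v p T = u := le_antisymm (hut T) (hTD A)
          have h3 : ((T\U).card:ℝ) = 0 := by
            rw [Finset.sdiff_eq_empty_iff_subset.mpr hTU]; simp
          have h4 : δ*((Z₀∩C).card:ℝ) ≤ δ*((T∩C).card:ℝ) := by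
            have : ((Z₀∩C).card:ℝ) ≤ ((T∩C).card:ℝ) := by exact_mod_cast hmin
            nlinarith
          rw [h1, h3]
          linarith
      · have h1 : (1:ℝ) ≤ ((T\U).card:ℝ) := by
          have h0 : 0 < (T \ U).card := by
            rw [Finset.card_pos]
            obtain ⟨j, hjT, hjU⟩ := Finset.not_subset.mp hTU
            exact ⟨j, Finset.mem_sdiff.mpr ⟨hjT, hjU⟩⟩
          exact_mod_cast h0
        have h2 : util v p T ≤ u := hut T
        have h4 : (0:ℝ) ≤ (if x ∈ T then 1-δ else 0) := by split <;> [linarith; norm_num]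
        linarith
    · have h1 : util v p T < u := by
        by_contra hcon
        push_neg at hcon
        exact hTD (fun T' => le_trans (hut T') hcon)
      have h2 : util v p T ≤ u - 1 :=
        int_le_sub_one_of_lt huint (util_int hvi hpi T) h1
      have h4 : (0:ℝ) ≤ (if x ∈ T then 1-δ else 0) := by split <;> [linarith; norm_num]
      linarith
  set P₂ : Ω → ℝ := fun j => P j + (if j = z then 1 else 0) with hP₂def
  have hPP₂ : ∀ j, P j ≤ P₂ j := by
    intro j
    have h1 : (0:ℝ) ≤ (if j = z then (1:ℝ) else 0) := by split <;> norm_num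
    simp only [hP₂def]
    linarith
  obtain ⟨Zs, hZsP₂, hZscont⟩ := hgs P P₂ hP0 hPP₂ Z₀ hZ₀P
  have hyZs : y ∈ Zs := by
    refine hZscont y hyZ₀ ?_
    have : y ≠ z := fun h => hzy h.symm
    simp only [hP₂def, if_neg this]
    ring
  have hP₂q : ∀ Z, util v P₂ Z = util v P Z - (if z ∈ Z then 1 else 0) := by
    intro Z
    unfold util
    simp only [hP₂def]
    rw [Finset.sum_add_distrib, sum_single]
    ring
  have hAP₂ : util v P₂ A = u - (1 - δ) := by
    have hA0 : ((A \ U).card : ℝ) = 0 := by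
      rw [Finset.sdiff_eq_empty_iff_subset.mpr hAU]; simp
    have hAC : ((A ∩ C).card : ℝ) = 0 := by
      rw [hCdef, Finset.inter_sdiff_self]; simp
    rw [hP₂q A, if_neg hzA, hPq A, hA0, if_pos hxA, hAC]
    ring
  have hcontr : util v P₂ A ≤ util v P₂ Zs := hZsP₂ A
  have hPle : ∀ Z, util v P Z ≤ util v p Z := by
    intro Z
    rw [hPq Z]
    have h1 : (0:ℝ) ≤ 2*((Z\U).card:ℝ) := mul_nonneg (by norm_num) (Nat.cast_nonneg _)
    have h2 : (0:ℝ) ≤ (if x ∈ Z then 1-δ else 0) := by split <;> [linarith; norm_num]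
    have h3 : (0:ℝ) ≤ δ*((Z∩C).card:ℝ) := mul_nonneg hδpos.le (Nat.cast_nonneg _)
    linarith
  by_cases hzZs : z ∈ Zs
  · have h1 : util v P₂ Zs = util v P Zs - 1 := by rw [hP₂q Zs, if_pos hzZs]
    have h2 : util v P Zs ≤ u := le_trans (hPle Zs) (hut Zs)
    linarith
  · have h1 : util v P₂ Zs = util v P Zs := by rw [hP₂q Zs, if_neg hzZs]; ring
    by_cases hxZs : x ∈ Zs
    · have hyZsC : (1:ℝ) ≤ ((Zs ∩ C).card : ℝ) := by
        have h0 : 0 < (Zs ∩ C).card :=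
          Finset.card_pos.mpr ⟨y, Finset.mem_inter.mpr ⟨hyZs, hyC⟩⟩
        exact_mod_cast h0
      have h2 := hPq Zs
      rw [if_pos hxZs] at h2
      have h3 : util v p Zs ≤ u := hut Zs
      have h4 : (0:ℝ) ≤ 2*((Zs\U).card:ℝ) := mul_nonneg (by norm_num) (Nat.cast_nonneg _)
      nlinarith
    · by_cases hZsU : Zs ⊆ U
      · by_cases hZsD : Zs ∈ Demand v p
        · exact hzZs (hall Zs hZsD hZsU hxZs).1
        · have h5 : util v p Zs < u := by
            by_contra hcon
            push_neg at hcon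
            exact hZsD (fun T' => le_trans (hut T') hcon)
          have h6 : util v p Zs ≤ u - 1 :=
            int_le_sub_one_of_lt huint (util_int hvi hpi Zs) h5
          have h7 := hPle Zs
          linarith
      · have h8 : (1:ℝ) ≤ ((Zs\U).card:ℝ) := by
          have h0 : 0 < (Zs \ U).card := by
            rw [Finset.card_pos]
            obtain ⟨j, hjT, hjU⟩ := Finset.not_subset.mp hZsU
            exact ⟨j, Finset.mem_sdiff.mpr ⟨hjT, hjU⟩⟩
          exact_mod_cast h0
        have h2 := hPq Zs
        have h9 : util v p Zs ≤ u := hut Zs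
        have h10 : (0:ℝ) ≤ (if x ∈ Zs then 1-δ else 0) := by split <;> [linarith; norm_num]
        have h11 : (0:ℝ) ≤ δ*((Zs∩C).card:ℝ) := mul_nonneg hδpos.le (Nat.cast_nonneg _)
        rw [if_neg hxZs] at h2
        linarith

end GSAux
namespace GSAux

variable {Ω : Type*} [Fintype Ω] [DecidableEq Ω]

set_option maxHeartbeats 1000000 in
lemma exch_aux {v : Finset Ω → ℝ} {p : Ω → ℝ}
    (hgs : GrossSubstitute v) (hvi : IsIntVal v) (hpi : IsIntVec p) (hp : ∀ j, 0 ≤ p j) :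
    ∀ n : ℕ, ∀ A C : Finset Ω, ∀ x : Ω, C.card ≤ n → A ∈ Demand v p → x ∈ A →
      Disjoint C A → (A.erase x ∪ C) ∈ Demand v p →
      A.erase x ∈ Demand v p ∨ ∃ y ∈ C, insert y (A.erase x) ∈ Demand v p := by
  intro n
  induction n with
  | zero =>
    intro A C x hC hA hxA hdisj hA₁
    left
    have hce : C = ∅ := Finset.card_eq_zero.mp (Nat.le_zero.mp hC)
    rwa [hce, Finset.union_empty] at hA₁
  | succ n ih =>
    intro A C x hC hA hxA hdisj hA₁
    by_cases hCn : C.card ≤ n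
    · exact ih A C x hCn hA hxA hdisj hA₁
    by_cases hC1 : C.card ≤ 1
    · have hCc : C.card = 1 := le_antisymm hC1 (by omega)
      obtain ⟨y, hy⟩ := Finset.card_eq_one.mp hCc
      right
      refine ⟨y, by rw [hy]; exact Finset.mem_singleton_self y, ?_⟩
      have heq : A.erase x ∪ {y} = insert y (A.erase x) := by
        ext a
        simp [Finset.mem_union, Finset.mem_insert, or_comm]
      rwa [hy, heq] at hA₁
    push_neg at hC1
    obtain ⟨z, hzC, y, hyC, hzy⟩ := Finset.one_lt_card.mp hC1
    have hxC : x ∉ C := fun h => (Finset.disjoint_left.mp hdisj h) hxA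
    have hzA : z ∉ A := Finset.disjoint_left.mp hdisj hzC
    have hyA : y ∉ A := Finset.disjoint_left.mp hdisj hyC
    have hzx : z ≠ x := fun h => hxC (h ▸ hzC)
    have hyx : y ≠ x := fun h => hxC (h ▸ hyC)
    set A₁ : Finset Ω := A.erase x ∪ C with hA₁def
    have hxA₁ : x ∉ A₁ := by
      simp only [hA₁def, Finset.mem_union, Finset.mem_erase]
      rintro (⟨h, -⟩ | h)
      · exact h rfl
      · exact hxC h
    have hzA₁ : z ∈ A₁ := Finset.mem_union_right _ hzC
    have hyA₁ : y ∈ A₁ := Finset.mem_union_right _ hyC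
    have hAA₁ : A₁ ∪ A = A ∪ C := by
      ext j
      simp only [hA₁def, Finset.mem_union, Finset.mem_erase]
      constructor
      · rintro ((⟨-, hj⟩ | hj) | hj) <;> tauto
      · rintro (hj | hj)
        · exact Or.inr hj
        · exact Or.inl (Or.inr hj)
    have hCcard : C.card = n + 1 := by omega
    by_cases hEz : ∃ Z ∈ Demand v p, Z ⊆ (A₁ ∪ A).erase z ∧ ∀ w ∈ ({x} : Finset Ω), w ∉ Z
    · obtain ⟨K, hKD, hKl, hKu, hKdich⟩ := core hgs hvi hpi hp hA₁ hA hzA₁ hzA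
        ({x}) (by simp) (by simp [hzx])
        (by intro w hw; rw [Finset.mem_singleton] at hw; rw [hw]; exact hxA₁)
        (by intro w hw; rw [Finset.mem_singleton] at hw; rw [hw]
            exact Finset.mem_union_right _ hxA)
      have hxK : x ∉ K := hKdich hEz x (Finset.mem_singleton_self x)
      have hKeq : K = A.erase x ∪ C.erase z := by
        apply Finset.Subset.antisymm
        · intro j hjK
          have hj2 := hKu hjK
          rw [hAA₁] at hj2
          have hjz := Finset.ne_of_mem_erase hj2
          have hjAC := Finset.mem_of_mem_erase hj2
          have hjx : j ≠ x := fun h => hxK (h ▸ hjK)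
          rcases Finset.mem_union.mp hjAC with hjA2 | hjC2
          · exact Finset.mem_union_left _ (Finset.mem_erase.mpr ⟨hjx, hjA2⟩)
          · exact Finset.mem_union_right _ (Finset.mem_erase.mpr ⟨hjz, hjC2⟩)
        · intro j hj
          apply hKl
          rcases Finset.mem_union.mp hj with hjA2 | hjC2
          · refine Finset.mem_erase.mpr ⟨?_, Finset.mem_union_left _ hjA2⟩
            intro h
            exact hzA (h ▸ Finset.mem_of_mem_erase hjA2)
          · exact Finset.mem_erase.mpr ⟨Finset.ne_of_mem_erase hjC2,
              Finset.mem_union_right _ (Finset.mem_of_mem_erase hjC2)⟩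
      have hrec := ih A (C.erase z) x
        (by rw [Finset.card_erase_of_mem hzC]; omega) hA hxA
        (Finset.disjoint_of_subset_left (Finset.erase_subset _ _) hdisj)
        (by rwa [← hKeq])
      rcases hrec with h | ⟨y', hy', h⟩
      · exact Or.inl h
      · exact Or.inr ⟨y', Finset.mem_of_mem_erase hy', h⟩
    · by_cases hEy : ∃ Z ∈ Demand v p, Z ⊆ (A₁ ∪ A).erase y ∧ ∀ w ∈ ({x} : Finset Ω), w ∉ Z
      · obtain ⟨K, hKD, hKl, hKu, hKdich⟩ := core hgs hvi hpi hp hA₁ hA hyA₁ hyA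
          ({x}) (by simp) (by simp [hyx])
          (by intro w hw; rw [Finset.mem_singleton] at hw; rw [hw]; exact hxA₁)
          (by intro w hw; rw [Finset.mem_singleton] at hw; rw [hw]
              exact Finset.mem_union_right _ hxA)
        have hxK : x ∉ K := hKdich hEy x (Finset.mem_singleton_self x)
        have hKeq : K = A.erase x ∪ C.erase y := by
          apply Finset.Subset.antisymm
          · intro j hjK
            have hj2 := hKu hjK
            rw [hAA₁] at hj2
            have hjy := Finset.ne_of_mem_erase hj2
            have hjAC := Finset.mem_of_mem_erase hj2
            have hjx : j ≠ x := fun h => hxK (h ▸ hjK)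
            rcases Finset.mem_union.mp hjAC with hjA2 | hjC2
            · exact Finset.mem_union_left _ (Finset.mem_erase.mpr ⟨hjx, hjA2⟩)
            · exact Finset.mem_union_right _ (Finset.mem_erase.mpr ⟨hjy, hjC2⟩)
          · intro j hj
            apply hKl
            rcases Finset.mem_union.mp hj with hjA2 | hjC2
            · refine Finset.mem_erase.mpr ⟨?_, Finset.mem_union_left _ hjA2⟩
              intro h
              exact hyA (h ▸ Finset.mem_of_mem_erase hjA2)
            · exact Finset.mem_erase.mpr ⟨Finset.ne_of_mem_erase hjC2,
                Finset.mem_union_right _ (Finset.mem_of_mem_erase hjC2)⟩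
        have hrec := ih A (C.erase y) x
          (by rw [Finset.card_erase_of_mem hyC]; omega) hA hxA
          (Finset.disjoint_of_subset_left (Finset.erase_subset _ _) hdisj)
          (by rwa [← hKeq])
        rcases hrec with h | ⟨y'', hy'', h⟩
        · exact Or.inl h
        · by_cases hy''z : y'' = z
          · exact Or.inr ⟨z, hzC, hy''z ▸ h⟩
          · exfalso
            apply hEz
            refine ⟨insert y'' (A.erase x), h, ?_, ?_⟩
            · rw [hAA₁]
              intro j hj
              rcases Finset.mem_insert.mp hj with rfl | hj2
              · exact Finset.mem_erase.mpr ⟨hy''z,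
                  Finset.mem_union_right _ (Finset.mem_of_mem_erase hy'')⟩
              · refine Finset.mem_erase.mpr ⟨?_, Finset.mem_union_left _ (Finset.mem_of_mem_erase hj2)⟩
                intro hjz
                exact hzA (hjz ▸ Finset.mem_of_mem_erase hj2)
            · intro w hw
              rw [Finset.mem_singleton] at hw
              subst hw
              intro hcon
              rcases Finset.mem_insert.mp hcon with h1 | h1
              · exact hxC (h1 ▸ Finset.mem_of_mem_erase hy'')
              · exact (Finset.mem_erase.mp h1).1 rfl
      · exfalso
        have hall : ∀ Z ∈ Demand v p, Z ⊆ A ∪ C → x ∉ Z → z ∈ Z ∧ y ∈ Z := by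
          intro Z hZ hZU hxZ
          constructor
          · by_contra hzZ
            refine hEz ⟨Z, hZ, ?_, ?_⟩
            · rw [hAA₁]
              exact fun a ha => Finset.mem_erase.mpr ⟨fun h => hzZ (h ▸ ha), hZU ha⟩
            · intro w hw
              rw [Finset.mem_singleton] at hw
              rw [hw]
              exact hxZ
          · by_contra hyZ
            refine hEy ⟨Z, hZ, ?_, ?_⟩
            · rw [hAA₁]
              exact fun a ha => Finset.mem_erase.mpr ⟨fun h => hyZ (h ▸ ha), hZU ha⟩
            · intro w hw
              rw [Finset.mem_singleton] at hw
              rw [hw]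
              exact hxZ
        have hA₁U : A₁ ⊆ A ∪ C :=
          Finset.union_subset ((Finset.erase_subset _ _).trans Finset.subset_union_left)
            Finset.subset_union_right
        exact nocomp hgs hvi hpi hp hA hA₁ hxA hxA₁ Finset.subset_union_left hA₁U
          hzy (Finset.mem_union_right _ hzC) hzA (Finset.mem_union_right _ hyC) hyA hall

lemma exchange {v : Finset Ω → ℝ} {p : Ω → ℝ}
    (hgs : GrossSubstitute v) (hvi : IsIntVal v) (hpi : IsIntVec p) (hp : ∀ j, 0 ≤ p j)
    {A B : Finset Ω} (hA : A ∈ Demand v p) (hB : B ∈ Demand v p)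
    {x : Ω} (hxA : x ∈ A) (hxB : x ∉ B) :
    A.erase x ∈ Demand v p ∨ ∃ y, y ∈ B ∧ y ∉ A ∧ insert y (A.erase x) ∈ Demand v p := by
  obtain ⟨K, hKD, hKl, hKu, -⟩ := core hgs hvi hpi hp hA hB hxA hxB ∅ (by simp)
    (Finset.notMem_empty x) (by simp) (Finset.empty_subset _)
  set C : Finset Ω := K \ A.erase x with hCdef
  have hKeq : A.erase x ∪ C = K := Finset.union_sdiff_of_subset hKl
  have hCA : ∀ j ∈ C, j ∉ A := by
    intro j hj
    have h1 := Finset.mem_sdiff.mp hj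
    have hjx : j ≠ x := Finset.ne_of_mem_erase (hKu h1.1)
    intro hjA
    exact h1.2 (Finset.mem_erase.mpr ⟨hjx, hjA⟩)
  have hdisj : Disjoint C A := Finset.disjoint_left.mpr (fun {a} ha => hCA a ha)
  have hCB : ∀ j ∈ C, j ∈ B := by
    intro j hj
    have h1 := Finset.mem_sdiff.mp hj
    have h2 := Finset.mem_of_mem_erase (hKu h1.1)
    rcases Finset.mem_union.mp h2 with h | h
    · exact absurd h (hCA j hj)
    · exact h
  rcases exch_aux hgs hvi hpi hp C.card A C x le_rfl hA hxA hdisj (by rwa [hKeq]) with h | ⟨y, hy, h⟩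
  · exact Or.inl h
  · exact Or.inr ⟨y, hCB y hy, hCA y hy, h⟩

end GSAux
namespace GSAux

variable {Ω : Type*} [Fintype Ω] [DecidableEq Ω]

def DChain (v : Finset Ω → ℝ) (p : Ω → ℝ) (S : ℕ → Finset Ω) : ℕ → Set (Finset Ω)
  | 0 => Demand v p
  | (t+1) => {Z | Z ∈ DChain v p S t ∧ ∀ Y ∈ DChain v p S t, (Z ∩ S t).card ≤ (Y ∩ S t).card}

lemma dchain_subset (v : Finset Ω → ℝ) (p : Ω → ℝ) (S : ℕ → Finset Ω) :
    ∀ t, DChain v p S t ⊆ Demand v p := by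
  intro t
  induction t with
  | zero => exact fun Z hZ => hZ
  | succ t ih => exact fun Z hZ => ih hZ.1

lemma dchain_le {v : Finset Ω → ℝ} {p : Ω → ℝ} {S : ℕ → Finset Ω} {u t : ℕ} (h : u ≤ t) :
    DChain v p S t ⊆ DChain v p S u := by
  induction h with
  | refl => exact fun Z hZ => hZ
  | step h ih => exact fun Z hZ => ih hZ.1

lemma dchain_nonempty {v : Finset Ω → ℝ} {p : Ω → ℝ} {S : ℕ → Finset Ω}
    (hne : ∃ D, D ∈ Demand v p) : ∀ t, ∃ D, D ∈ DChain v p S t := by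
  classical
  intro t
  induction t with
  | zero => exact hne
  | succ t ih =>
    obtain ⟨D, hD⟩ := ih
    obtain ⟨Z, hZs, hZmin⟩ := Finset.exists_min_image
      (Finset.univ.filter (fun Z => Z ∈ DChain v p S t)) (fun Z => (Z ∩ S t).card)
      ⟨D, Finset.mem_filter.mpr ⟨Finset.mem_univ _, hD⟩⟩
    exact ⟨Z, (Finset.mem_filter.mp hZs).2,
      fun Y hY => hZmin Y (Finset.mem_filter.mpr ⟨Finset.mem_univ _, hY⟩)⟩

set_option maxHeartbeats 1000000 in
lemma dchain_global {v : Finset Ω → ℝ} {p : Ω → ℝ}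
    (hgs : GrossSubstitute v) (hvi : IsIntVal v) (hpi : IsIntVec p) (hp : ∀ j, 0 ≤ p j)
    (S : ℕ → Finset Ω) (hS : ∀ t, S (t+1) ⊆ S t) (t : ℕ) :
    ∀ D ∈ DChain v p S (t+1), ∀ Z ∈ Demand v p, (D ∩ S t).card ≤ (Z ∩ S t).card := by
  classical
  have hSle : ∀ u w : ℕ, u ≤ w → S w ⊆ S u := by
    intro u w h
    induction h with
    | refl => exact subset_rfl
    | step _ ih => exact (hS _).trans ih
  obtain ⟨D₀, hD₀⟩ := demand_nonempty v p
  obtain ⟨B, hBs, hBmin⟩ := Finset.exists_min_image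
    (Finset.univ.filter (fun Z => Z ∈ Demand v p)) (fun Z => (Z ∩ S t).card)
    ⟨D₀, Finset.mem_filter.mpr ⟨Finset.mem_univ _, hD₀⟩⟩
  have hBD : B ∈ Demand v p := (Finset.mem_filter.mp hBs).2
  have hBmin' : ∀ Z ∈ Demand v p, (B ∩ S t).card ≤ (Z ∩ S t).card := fun Z hZ =>
    hBmin Z (Finset.mem_filter.mpr ⟨Finset.mem_univ _, hZ⟩)
  obtain ⟨C₀, hC₀⟩ := dchain_nonempty (S := S) ⟨D₀, hD₀⟩ t
  obtain ⟨A₀, hA₀s, hA₀min⟩ := Finset.exists_min_image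
    (Finset.univ.filter (fun Z => Z ∈ DChain v p S t)) (fun Z => (Z ∩ S t).card)
    ⟨C₀, Finset.mem_filter.mpr ⟨Finset.mem_univ _, hC₀⟩⟩
  have hA₀D : A₀ ∈ DChain v p S t := (Finset.mem_filter.mp hA₀s).2
  have hA₀min' : ∀ Z ∈ DChain v p S t, (A₀ ∩ S t).card ≤ (Z ∩ S t).card := fun Z hZ =>
    hA₀min Z (Finset.mem_filter.mpr ⟨Finset.mem_univ _, hZ⟩)
  obtain ⟨A, hAs2, hAmin2⟩ := Finset.exists_min_image
    ((Finset.univ.filter (fun Z => Z ∈ DChain v p S t)).filter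
      (fun Z => (Z ∩ S t).card = (A₀ ∩ S t).card)) (fun Z => (Z \ B).card)
    ⟨A₀, Finset.mem_filter.mpr ⟨Finset.mem_filter.mpr ⟨Finset.mem_univ _, hA₀D⟩, rfl⟩⟩
  have hAD : A ∈ DChain v p S t :=
    (Finset.mem_filter.mp (Finset.mem_filter.mp hAs2).1).2
  have hAcard : (A ∩ S t).card = (A₀ ∩ S t).card := (Finset.mem_filter.mp hAs2).2
  have hAfirst : ∀ Z ∈ DChain v p S t, (A ∩ S t).card ≤ (Z ∩ S t).card := by
    rw [hAcard]; exact hA₀min'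
  suffices hkey : (A ∩ S t).card ≤ (B ∩ S t).card by
    intro D hD Z hZ
    exact le_trans (le_trans (hD.2 A hAD) hkey) (hBmin' Z hZ)
  by_contra hgt
  push_neg at hgt
  have hex : ∃ x, x ∈ A ∩ S t ∧ x ∉ B := by
    by_contra hc
    push_neg at hc
    have hsub : A ∩ S t ⊆ B ∩ S t := fun a ha =>
      Finset.mem_inter.mpr ⟨hc a ha, (Finset.mem_inter.mp ha).2⟩
    exact absurd (Finset.card_le_card hsub) (not_le.mpr hgt)
  obtain ⟨x, hxASt, hxB⟩ := hex
  have hxA : x ∈ A := (Finset.mem_inter.mp hxASt).1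
  have hxSt : x ∈ S t := (Finset.mem_inter.mp hxASt).2
  have hADem : A ∈ Demand v p := dchain_subset v p S t hAD
  rcases exchange hgs hvi hpi hp hADem hBD hxA hxB with hE | ⟨y, hyB, hyA, hE⟩
  · set A' := A.erase x with hA'def
    have hcard : ∀ u, u ≤ t → (A' ∩ S u).card < (A ∩ S u).card := by
      intro u hu
      have hxSu : x ∈ S u := hSle u t hu hxSt
      rw [hA'def, Finset.erase_inter]
      exact Finset.card_erase_lt_of_mem (Finset.mem_inter.mpr ⟨hxA, hxSu⟩)
    have hchain : ∀ u, u ≤ t → A' ∈ DChain v p S u := by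
      intro u hu
      induction u with
      | zero => exact hE
      | succ k ihk =>
        have hk : k ≤ t := Nat.le_of_succ_le hu
        refine ⟨ihk hk, fun Y hY => ?_⟩
        have hAk : A ∈ DChain v p S (k+1) := dchain_le hu hAD
        exact le_trans (le_of_lt (hcard k hk)) (hAk.2 Y hY)
    exact absurd (hAfirst A' (hchain t le_rfl)) (not_le.mpr (hcard t le_rfl))
  · set A' := insert y (A.erase x) with hA'def
    have hcard_eq : ∀ u, x ∈ S u → y ∈ S u → (A' ∩ S u).card = (A ∩ S u).card := by
      intro u hxu hyu
      have hxmem : x ∈ A ∩ S u := Finset.mem_inter.mpr ⟨hxA, hxu⟩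
      have hpos : 0 < (A ∩ S u).card := Finset.card_pos.mpr ⟨x, hxmem⟩
      have hnm : y ∉ (A.erase x) ∩ S u := fun hcon =>
        hyA (Finset.mem_of_mem_erase (Finset.mem_inter.mp hcon).1)
      rw [hA'def, Finset.insert_inter_of_mem hyu,
        Finset.card_insert_of_notMem hnm, Finset.erase_inter,
        Finset.card_erase_of_mem hxmem]
      omega
    have hcard_lt : ∀ u, x ∈ S u → y ∉ S u → (A' ∩ S u).card < (A ∩ S u).card := by
      intro u hxu hyu
      have hxmem : x ∈ A ∩ S u := Finset.mem_inter.mpr ⟨hxA, hxu⟩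
      rw [hA'def, Finset.insert_inter_of_notMem hyu, Finset.erase_inter]
      exact Finset.card_erase_lt_of_mem hxmem
    by_cases hyall : ∀ u, u ≤ t → y ∈ S u
    · have hchain : ∀ u, u ≤ t → A' ∈ DChain v p S u := by
        intro u hu
        induction u with
        | zero => exact hE
        | succ k ihk =>
          have hk : k ≤ t := Nat.le_of_succ_le hu
          refine ⟨ihk hk, fun Y hY => ?_⟩
          have hAk : A ∈ DChain v p S (k+1) := dchain_le hu hAD
          rw [hcard_eq k (hSle k t hk hxSt) (hyall k hk)]
          exact hAk.2 Y hY
      have hA't : A' ∈ DChain v p S t := hchain t le_rfl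
      have hA'eq : (A' ∩ S t).card = (A₀ ∩ S t).card := by
        rw [hcard_eq t hxSt (hyall t le_rfl), hAcard]
      have hA's2 : A' ∈ (Finset.univ.filter (fun Z => Z ∈ DChain v p S t)).filter
          (fun Z => (Z ∩ S t).card = (A₀ ∩ S t).card) :=
        Finset.mem_filter.mpr ⟨Finset.mem_filter.mpr ⟨Finset.mem_univ _, hA't⟩, hA'eq⟩
      have hlt : (A' \ B).card < (A \ B).card := by
        have h1 : A' \ B = (A \ B).erase x := by
          ext a
          simp only [hA'def, Finset.mem_sdiff, Finset.mem_insert, Finset.mem_erase]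
          constructor
          · rintro ⟨rfl | ⟨hax, haA⟩, haB⟩
            · exact absurd hyB haB
            · exact ⟨hax, haA, haB⟩
          · rintro ⟨hax, haA, haB⟩
            exact ⟨Or.inr ⟨hax, haA⟩, haB⟩
        rw [h1]
        exact Finset.card_erase_lt_of_mem (Finset.mem_sdiff.mpr ⟨hxA, hxB⟩)
      exact absurd (hAmin2 A' hA's2) (not_le.mpr hlt)
    · push_neg at hyall
      obtain ⟨u₀, hu₀t, hyu₀⟩ := hyall
      have hPex : ∃ u, u ≤ t ∧ y ∉ S u := ⟨u₀, hu₀t, hyu₀⟩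
      have hu₁spec := Nat.find_spec hPex
      set u₁ := Nat.find hPex with hu₁def
      obtain ⟨hu₁t, hyu₁⟩ := hu₁spec
      have hymem : ∀ w, w < u₁ → y ∈ S w := by
        intro w hw
        by_contra hcon
        exact Nat.find_min hPex hw ⟨le_trans (le_of_lt hw) hu₁t, hcon⟩
      have hchain : ∀ w, w ≤ u₁ → A' ∈ DChain v p S w := by
        intro w hw
        induction w with
        | zero => exact hE
        | succ k ihk =>
          have hk : k < u₁ := Nat.lt_of_succ_le hw
          have hkt : k ≤ t := le_trans (le_of_lt hk) hu₁t
          refine ⟨ihk (Nat.le_of_succ_le hw), fun Y hY => ?_⟩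
          have hAk : A ∈ DChain v p S (k+1) :=
            dchain_le (le_trans hw hu₁t) hAD
          rw [hcard_eq k (hSle k t hkt hxSt) (hymem k hk)]
          exact hAk.2 Y hY
      have hA'u₁ : A' ∈ DChain v p S u₁ := hchain u₁ le_rfl
      have hlt := hcard_lt u₁ (hSle u₁ t hu₁t hxSt) hyu₁
      rcases Nat.lt_or_ge u₁ t with h | h
      · have hAk : A ∈ DChain v p S (u₁+1) := dchain_le (Nat.succ_le_of_lt h) hAD
        exact absurd (hAk.2 A' hA'u₁) (not_le.mpr hlt)
      · have heq : u₁ = t := le_antisymm hu₁t h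
        exact absurd (hAfirst A' (heq ▸ hA'u₁)) (not_le.mpr (heq ▸ hlt))

lemma chain_min {v : Finset Ω → ℝ} {p : Ω → ℝ}
    (hgs : GrossSubstitute v) (hvi : IsIntVal v) (hpi : IsIntVec p) (hp : ∀ j, 0 ≤ p j)
    (S : ℕ → Finset Ω) (hS : ∀ t, S (t+1) ⊆ S t) (N : ℕ) :
    ∃ D ∈ Demand v p, ∀ t, t < N → ∀ Z ∈ Demand v p, (D ∩ S t).card ≤ (Z ∩ S t).card := by
  obtain ⟨D, hD⟩ := dchain_nonempty (S := S) (demand_nonempty v p) N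
  refine ⟨D, dchain_subset v p S N hD, fun t ht Z hZ => ?_⟩
  exact dchain_global hgs hvi hpi hp S hS t D (dchain_le (Nat.succ_le_of_lt ht) hD) Z hZ

end GSAux
set_option maxHeartbeats 1000000 in
/-- Optimality: if `p ≤ p*` for a pointwise-minimal optimal `p*` and
`f_p(S) ≤ 0` for every `S`, then `L(p) ≤ L(p*)`; in particular `p` is also optimal. -/
theorem gs_auction_terminal_optimal {Ω : Type*} [Fintype Ω] [DecidableEq Ω] {n : ℕ}
    (v : Fin n → Finset Ω → ℝ) (hval : ∀ i, IsValuation (v i))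
    (hgs : ∀ i, GrossSubstitute (v i)) (hint : ∀ i, IsIntVal (v i))
    (pstar : Ω → ℝ) (hps : ∀ j, 0 ≤ pstar j) (hpsint : IsIntVec pstar)
    (hopt : ∀ q : Ω → ℝ, (∀ j, 0 ≤ q j) → IsIntVec q → Lyap v pstar ≤ Lyap v q)
    (hmin : ∀ q : Ω → ℝ, (∀ j, 0 ≤ q j) → IsIntVec q →
      (∀ r : Ω → ℝ, (∀ j, 0 ≤ r j) → IsIntVec r → Lyap v q ≤ Lyap v r) →
      ∀ j, pstar j ≤ q j)
    (p : Ω → ℝ) (hp : ∀ j, 0 ≤ p j) (hpint : IsIntVec p)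
    (hle : ∀ j, p j ≤ pstar j)
    (hf : ∀ S : Finset Ω, fTot v p S ≤ 0) :
    Lyap v p ≤ Lyap v pstar ∧
    ∀ q : Ω → ℝ, (∀ j, 0 ≤ q j) → IsIntVec q → Lyap v p ≤ Lyap v q := by
  classical
  have hkex : ∀ j, ∃ m : ℕ, (m:ℝ) = pstar j - p j := by
    intro j
    obtain ⟨a, ha⟩ := hpint j
    obtain ⟨b, hb⟩ := hpsint j
    have hab : a ≤ b := by
      have h := hle j
      rw [ha, hb] at h
      exact_mod_cast h
    refine ⟨(b - a).toNat, ?_⟩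
    have h2 : ((b - a).toNat : ℤ) = b - a := Int.toNat_of_nonneg (by omega)
    rw [ha, hb]
    exact_mod_cast h2
  choose k hk using hkex
  set N : ℕ := Finset.univ.sup k with hNdef
  have hkN : ∀ j, k j ≤ N := fun j => Finset.le_sup (Finset.mem_univ j)
  set S : ℕ → Finset Ω := fun t => Finset.univ.filter (fun j => t < k j) with hSdef
  have hSdec : ∀ t, S (t+1) ⊆ S t := by
    intro t j hj
    simp only [hSdef, Finset.mem_filter] at hj ⊢
    exact ⟨hj.1, by omega⟩
  have hcount : ∀ Z : Finset Ω, ∑ j ∈ Z, k j = ∑ t ∈ Finset.range N, (Z ∩ S t).card := by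
    intro Z
    have h1 : ∀ t, Z ∩ S t = Z.filter (fun j => t < k j) := by
      intro t
      ext j
      simp [hSdef, Finset.mem_filter, Finset.mem_inter]
    calc ∑ j ∈ Z, k j = ∑ j ∈ Z, ((Finset.range N).filter (fun t => t < k j)).card := by
          refine Finset.sum_congr rfl fun j _ => ?_
          have h2 : (Finset.range N).filter (fun t => t < k j) = Finset.range (k j) := by
            ext a
            simp only [Finset.mem_filter, Finset.mem_range]
            have := hkN j
            omega
          rw [h2, Finset.card_range]
      _ = ∑ j ∈ Z, ∑ t ∈ Finset.range N, (if t < k j then 1 else 0) := by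
          refine Finset.sum_congr rfl fun j _ => ?_
          rw [Finset.card_filter]
      _ = ∑ t ∈ Finset.range N, ∑ j ∈ Z, (if t < k j then 1 else 0) := Finset.sum_comm
      _ = ∑ t ∈ Finset.range N, (Z ∩ S t).card := by
          refine Finset.sum_congr rfl fun t _ => ?_
          rw [← Finset.card_filter, ← h1 t]
  have hDex : ∀ i, ∃ D ∈ Demand (v i) p, ∀ t, t < N → ∀ Z ∈ Demand (v i) p,
      (D ∩ S t).card ≤ (Z ∩ S t).card :=
    fun i => GSAux.chain_min (hgs i) (hint i) hpint hp S hSdec N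
  choose D hD1 hD2 using hDex
  have hsumt : ∀ t, t < N → (∑ i, ((D i ∩ S t).card : ℤ)) ≤ ((S t).card : ℤ) := by
    intro t ht
    have h1 : ∀ i, ((D i ∩ S t).card : ℤ) ≤ (fMin (v i) p (S t) : ℤ) := by
      intro i
      obtain ⟨Z, hZD, hZc⟩ := GSAux.fmin_witness (v i) p (S t)
      rw [← hZc]
      exact_mod_cast hD2 i t ht Z hZD
    have h2 := hf (S t)
    unfold fTot at h2
    have h3 : (∑ i, ((D i ∩ S t).card:ℤ)) ≤ ∑ i, (fMin (v i) p (S t) : ℤ) :=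
      Finset.sum_le_sum (fun i _ => h1 i)
    linarith
  have hkeyZ : (∑ i, ∑ j ∈ D i, (k j : ℤ)) ≤ ∑ j : Ω, (k j : ℤ) := by
    have e1 : ∀ Z : Finset Ω, (∑ j ∈ Z, (k j:ℤ))
        = ∑ t ∈ Finset.range N, ((Z ∩ S t).card : ℤ) := by
      intro Z
      exact_mod_cast hcount Z
    calc ∑ i, ∑ j ∈ D i, (k j:ℤ) = ∑ i, ∑ t ∈ Finset.range N, ((D i ∩ S t).card:ℤ) :=
          Finset.sum_congr rfl fun i _ => e1 (D i)
      _ = ∑ t ∈ Finset.range N, ∑ i, ((D i ∩ S t).card:ℤ) := Finset.sum_comm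
      _ ≤ ∑ t ∈ Finset.range N, ((S t).card:ℤ) :=
          Finset.sum_le_sum (fun t ht => hsumt t (Finset.mem_range.mp ht))
      _ = ∑ j : Ω, (k j:ℤ) := by
          have h4 : ∑ j : Ω, k j = ∑ t ∈ Finset.range N, (S t).card := by
            have h5 := hcount Finset.univ
            simpa [Finset.univ_inter] using h5
          exact_mod_cast h4.symm
  have hkeyR : (∑ i, ∑ j ∈ D i, (pstar j - p j)) ≤ ∑ j : Ω, (pstar j - p j) := by
    have hcast : ∀ Z : Finset Ω, ∑ j ∈ Z, (pstar j - p j) = ∑ j ∈ Z, ((k j : ℝ)) :=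
      fun Z => Finset.sum_congr rfl fun j _ => (hk j).symm
    rw [show (∑ i, ∑ j ∈ D i, (pstar j - p j)) = ∑ i, ∑ j ∈ D i, ((k j:ℝ)) from
      Finset.sum_congr rfl fun i _ => hcast (D i), hcast Finset.univ]
    exact_mod_cast hkeyZ
  have hui : ∀ i, maxUtil (v i) p ≤ maxUtil (v i) pstar + ∑ j ∈ D i, (pstar j - p j) := by
    intro i
    have h1 : maxUtil (v i) p = util (v i) p (D i) := GSAux.maxutil_eq (hD1 i)
    have h2 : util (v i) pstar (D i) ≤ maxUtil (v i) pstar := GSAux.util_le_maxutil _ _ _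
    have h3 : util (v i) pstar (D i) = util (v i) p (D i) - ∑ j ∈ D i, (pstar j - p j) := by
      unfold util
      rw [Finset.sum_sub_distrib]
      ring
    linarith
  have main : Lyap v p ≤ Lyap v pstar := by
    unfold Lyap
    have hsum1 : ∑ i, maxUtil (v i) p ≤
        ∑ i, (maxUtil (v i) pstar + ∑ j ∈ D i, (pstar j - p j)) :=
      Finset.sum_le_sum fun i _ => hui i
    rw [Finset.sum_add_distrib] at hsum1
    have hps2 : ∑ j : Ω, (pstar j - p j) = ∑ j : Ω, pstar j - ∑ j : Ω, p j :=
      Finset.sum_sub_distrib _ _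
    linarith [hkeyR]
  exact ⟨main, fun q hq hqi => le_trans main (hopt q hq hqi)⟩
end
end

section
/- Let v_1,…,v_n be arbitrary valuations on a finite set Ω (not necessarily submodular), let p* be a Walrasian price vector for v_1,…,v_n, and let p ≤ p* be a price vector admitting an envy-free allocation. Then L(p) ≤ L(p*), hence L(p) = L(p*), and p is itself a Walrasian price vector. -/
open Finset

noncomputable section

variable {Ω : Type*}

lemma util_le_maxUtil [Fintype Ω] (v : Finset Ω → ℝ) (p : Ω → ℝ) (S : Finset Ω) :
    util v p S ≤ maxUtil v p :=
  Finset.le_sup' _ (Finset.mem_univ S)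

lemma maxUtil_eq_of_demand [Fintype Ω] {v : Finset Ω → ℝ} {p : Ω → ℝ} {S : Finset Ω}
    (hS : S ∈ Demand v p) : maxUtil v p = util v p S :=
  le_antisymm (Finset.sup'_le _ _ fun T _ => hS T) (util_le_maxUtil v p S)

lemma sum_split [Fintype Ω] [DecidableEq Ω] {n : ℕ} (A : Fin n → Finset Ω)
    (hd : ∀ i j, i ≠ j → Disjoint (A i) (A j)) (q : Ω → ℝ) :
    ∑ j, q j = (∑ i, ∑ j ∈ A i, q j) + ∑ j ∈ (Finset.univ.biUnion A)ᶜ, q j := by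
  rw [← Finset.sum_biUnion (fun i _ j _ hij => hd i j hij),
    Finset.sum_add_sum_compl]

lemma lyap_ef_eq [Fintype Ω] [DecidableEq Ω] {n : ℕ} {v : Fin n → Finset Ω → ℝ} {p : Ω → ℝ}
    {A : Fin n → Finset Ω} (hA : EnvyFree v p A) :
    Lyap v p = (∑ i, v i (A i)) + ∑ j ∈ (Finset.univ.biUnion A)ᶜ, p j := by
  have h : ∀ i, maxUtil (v i) p = util (v i) p (A i) :=
    fun i => maxUtil_eq_of_demand (hA.2 i)
  simp only [Lyap, h, util, sum_split A hA.1 p, Finset.sum_sub_distrib]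
  ring

lemma lyap_ge [Fintype Ω] [DecidableEq Ω] {n : ℕ} (v : Fin n → Finset Ω → ℝ) (q : Ω → ℝ)
    (A : Fin n → Finset Ω) (hd : ∀ i j, i ≠ j → Disjoint (A i) (A j)) :
    (∑ i, v i (A i)) + ∑ j ∈ (Finset.univ.biUnion A)ᶜ, q j ≤ Lyap v q := by
  have h : ∀ i, util (v i) q (A i) ≤ maxUtil (v i) q := fun i => util_le_maxUtil _ _ _
  have := Finset.sum_le_sum (fun i (_ : i ∈ Finset.univ) => h i)
  simp only [Lyap, util, Finset.sum_sub_distrib] at this ⊢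
  rw [sum_split A hd q]
  linarith

/-- if `p*` is Walrasian and `p ≤ p*` admits an envy-free allocation,
then `L(p) ≤ L(p*)`, hence `L(p) = L(p*)` and `p` is itself Walrasian. -/
theorem dominated_envy_free_is_walrasian {Ω : Type*} [Fintype Ω] [DecidableEq Ω] {n : ℕ}
    (v : Fin n → Finset Ω → ℝ) (hval : ∀ i, IsValuation (v i))
    (pstar : Ω → ℝ) (hps : ∀ j, 0 ≤ pstar j)
    (hws : ∃ A : Fin n → Finset Ω, Walrasian v pstar A)
    (p : Ω → ℝ) (hp : ∀ j, 0 ≤ p j) (hle : ∀ j, p j ≤ pstar j)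
    (hef : ∃ A : Fin n → Finset Ω, EnvyFree v p A) :
    Lyap v p ≤ Lyap v pstar ∧ Lyap v p = Lyap v pstar ∧
    ∃ A : Fin n → Finset Ω, Walrasian v p A := by
  obtain ⟨B, hB⟩ := hws
  obtain ⟨A, hA⟩ := hef
  -- L(p*) = Σ v_i(B_i)
  have hBcomp : ∑ j ∈ (Finset.univ.biUnion B)ᶜ, pstar j = 0 := by
    refine Finset.sum_eq_zero fun x hx => ?_
    refine hB.2 x fun i hi => ?_
    simp only [Finset.mem_compl, Finset.mem_biUnion] at hx
    exact hx ⟨i, Finset.mem_univ i, hi⟩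
  have h2 : Lyap v pstar = ∑ i, v i (B i) := by
    rw [lyap_ef_eq hB.1, hBcomp, add_zero]
  -- L(p) ≤ L(p*)
  have h1 : Lyap v p = (∑ i, v i (A i)) + ∑ j ∈ (Finset.univ.biUnion A)ᶜ, p j :=
    lyap_ef_eq hA
  have hle1 : Lyap v p ≤ Lyap v pstar := by
    have := lyap_ge v pstar A hA.1
    have hsum : ∑ j ∈ (Finset.univ.biUnion A)ᶜ, p j ≤
        ∑ j ∈ (Finset.univ.biUnion A)ᶜ, pstar j :=
      Finset.sum_le_sum fun j _ => hle j
    linarith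
  -- L(p*) ≤ L(p)
  have hBnn : 0 ≤ ∑ j ∈ (Finset.univ.biUnion B)ᶜ, p j :=
    Finset.sum_nonneg fun j _ => hp j
  have hle2 : Lyap v pstar ≤ Lyap v p := by
    have := lyap_ge v p B hB.1.1
    linarith
  have heq : Lyap v p = Lyap v pstar := le_antisymm hle1 hle2
  refine ⟨hle1, heq, B, ?_⟩
  -- all inequalities are tight: B is demanded at p and unallocated items have p = 0
  have key : (∑ i, (maxUtil (v i) p - util (v i) p (B i))) +
      ∑ j ∈ (Finset.univ.biUnion B)ᶜ, p j = 0 := by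
    have hL : Lyap v p = (∑ i, maxUtil (v i) p) + ∑ j, p j := rfl
    rw [sum_split B hB.1.1 p] at hL
    simp only [util, Finset.sum_sub_distrib]
    have : Lyap v p = ∑ i, v i (B i) := heq.trans h2
    linarith
  have hterm_nn : ∀ i ∈ (Finset.univ : Finset (Fin n)),
      0 ≤ maxUtil (v i) p - util (v i) p (B i) :=
    fun i _ => sub_nonneg.mpr (util_le_maxUtil _ _ _)
  have hsum1_nn : 0 ≤ ∑ i, (maxUtil (v i) p - util (v i) p (B i)) :=
    Finset.sum_nonneg hterm_nn
  have hsum1_zero : ∑ i, (maxUtil (v i) p - util (v i) p (B i)) = 0 := by linarith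
  have hsum2_zero : ∑ j ∈ (Finset.univ.biUnion B)ᶜ, p j = 0 := by linarith
  have heach : ∀ i ∈ (Finset.univ : Finset (Fin n)),
      maxUtil (v i) p - util (v i) p (B i) = 0 :=
    (Finset.sum_eq_zero_iff_of_nonneg hterm_nn).mp hsum1_zero
  refine ⟨⟨hB.1.1, fun i T => ?_⟩, fun x hx => ?_⟩
  · have := heach i (Finset.mem_univ i)
    have h := util_le_maxUtil (v i) p T
    linarith
  · have hxmem : x ∈ (Finset.univ.biUnion B)ᶜ := by
      simp only [Finset.mem_compl, Finset.mem_biUnion]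
      rintro ⟨i, -, hi⟩
      exact hx i hi
    exact le_antisymm (by
      have := (Finset.sum_eq_zero_iff_of_nonneg fun j _ => hp j).mp hsum2_zero x hxmem
      exact le_of_eq this) (hp x)
end
end

section
/- Let v_1,…,v_n be integer-valued valuations on a finite set Ω each in GGS(2,M), let p* be an integer Walrasian price vector, and let p ≤ p* be an integer price vector. For S ⊆ Ω define g_p(S) = |{ small players i : every x ∈ Ω with {x} ∈ D_i(p) satisfies x ∈ S }| − |S|. Suppose there is no injective assignment of pairwise distinct demanded singletons to all small players, and let O* ⊆ Ω satisfy: g_p(O*) ≥ g_p(S) for every S ⊆ Ω, g_p(T) < g_p(O*) for every proper subset T ⊊ O*, and g_p(O*) > 0. Then p + 1_{O*} ≤ p*. -/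
open Finset

noncomputable section

variable {Ω : Type*}

/-- `g_p(S)`: the number of small players all of whose demanded singletons lie in `S`,
minus `|S|`. -/
def gOver {Ω : Type*} [DecidableEq Ω] {n : ℕ}
    (v : Fin n → Finset Ω → ℝ) (p : Ω → ℝ) (S : Finset Ω) : ℤ :=
  ({i : Fin n | SmallPlayer (v i) p ∧
      ∀ x : Ω, ({x} : Finset Ω) ∈ Demand (v i) p → x ∈ S}).ncard - S.card

/-- in the `GGS(2,M)` ascending auction, the price increase on the minimal
most over-demanded set of the induced unit-demand auction never overshoots an integer
Walrasian price vector dominating the current price. -/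
theorem ggs2_auction_step_never_overshoots {Ω : Type*} [Fintype Ω] [DecidableEq Ω]
    {n : ℕ} (M : ℝ) (hM : 0 ≤ M)
    (v : Fin n → Finset Ω → ℝ) (hval : ∀ i, IsValuation (v i))
    (hggs : ∀ i, GGS 2 M (v i)) (hint : ∀ i, IsIntVal (v i))
    (pstar : Ω → ℝ) (hps : ∀ j, 0 ≤ pstar j) (hpsint : IsIntVec pstar)
    (hw : ∃ A : Fin n → Finset Ω, Walrasian v pstar A)
    (p : Ω → ℝ) (hp : ∀ j, 0 ≤ p j) (hpint : IsIntVec p)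
    (hle : ∀ j, p j ≤ pstar j)
    (hnomatch : ¬ ∃ φ : Fin n → Ω,
      Set.InjOn φ {i | SmallPlayer (v i) p} ∧
      ∀ i : Fin n, SmallPlayer (v i) p → ({φ i} : Finset Ω) ∈ Demand (v i) p)
    (O : Finset Ω)
    (hOmax : ∀ S : Finset Ω, gOver v p S ≤ gOver v p O)
    (hOmin : ∀ T : Finset Ω, T ⊂ O → gOver v p T < gOver v p O)
    (hOpos : 0 < gOver v p O) :
    ∀ j, addInd p O j ≤ pstar j := by
  classical
  intro j
  unfold addInd
  by_cases hjO : j ∈ O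
  · simp only [hjO, if_true]
    by_contra hcon
    push_neg at hcon
    -- The set of items of O whose price has already caught up with pstar
    set T : Finset Ω := O.filter (fun x => pstar x = p x) with hTdef
    have hTsub : T ⊆ O := Finset.filter_subset _ _
    have hjT : j ∈ T := by
      refine Finset.mem_filter.mpr ⟨hjO, ?_⟩
      obtain ⟨a, ha⟩ := hpint j
      obtain ⟨b, hb⟩ := hpsint j
      have h1 : (a : ℝ) ≤ b := by rw [← ha, ← hb]; exact hle j
      have h2 : (b : ℝ) < a + 1 := by rw [← ha, ← hb]; exact hcon
      have h1' : a ≤ b := by exact_mod_cast h1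
      have h2' : b < a + 1 := by exact_mod_cast h2
      have : b = a := by omega
      rw [ha, hb, this]
    have hssub : O \ T ⊂ O := by
      refine Finset.ssubset_iff_of_subset Finset.sdiff_subset |>.mpr ?_
      exact ⟨j, hjO, by simp [hjT]⟩
    obtain ⟨A, ⟨hdisj, hdem⟩, hzero⟩ := hw
    set NO : Set (Fin n) := {i : Fin n | SmallPlayer (v i) p ∧
        ∀ x : Ω, ({x} : Finset Ω) ∈ Demand (v i) p → x ∈ O} with hNOdef
    set NO' : Set (Fin n) := {i : Fin n | SmallPlayer (v i) p ∧
        ∀ x : Ω, ({x} : Finset Ω) ∈ Demand (v i) p → x ∈ O \ T} with hNO'def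
    have hNsub : NO' ⊆ NO := by
      intro i hi
      exact ⟨hi.1, fun x hx => (Finset.mem_sdiff.mp (hi.2 x hx)).1⟩
    -- utilities only go down from p to pstar
    have hmono : ∀ i (S : Finset Ω), util (v i) pstar S ≤ util (v i) p S := by
      intro i S
      unfold util
      have : ∑ k ∈ S, p k ≤ ∑ k ∈ S, pstar k := Finset.sum_le_sum fun k _ => hle k
      linarith
    -- Key step: every player in NO \ NO' is allocated a singleton of T by A
    have hkey : ∀ i ∈ NO \ NO', ∃ y, y ∈ T ∧ A i = {y} := by
      intro i hi
      obtain ⟨hiNO, hiNO'⟩ := hi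
      obtain ⟨hsmall, hall⟩ := hiNO
      have : ∃ x : Ω, ({x} : Finset Ω) ∈ Demand (v i) p ∧ x ∉ O \ T := by
        by_contra hx
        push_neg at hx
        exact hiNO' ⟨hsmall, hx⟩
      obtain ⟨x, hxD, hxnot⟩ := this
      have hxO : x ∈ O := hall x hxD
      have hxT : x ∈ T := by
        by_contra hxT
        exact hxnot (Finset.mem_sdiff.mpr ⟨hxO, hxT⟩)
      have hpx : pstar x = p x := (Finset.mem_filter.mp hxT).2
      have hxD' : ∀ S : Finset Ω, util (v i) p S ≤ util (v i) p {x} := hxD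
      have hux : util (v i) pstar {x} = util (v i) p {x} := by
        unfold util
        rw [Finset.sum_singleton, Finset.sum_singleton, hpx]
      have hAdem : ∀ S : Finset Ω, util (v i) pstar S ≤ util (v i) pstar (A i) := hdem i
      have h1 : util (v i) p {x} ≤ util (v i) pstar (A i) := by
        rw [← hux]; exact hAdem {x}
      have h2 : util (v i) pstar (A i) ≤ util (v i) p (A i) := hmono i (A i)
      have h3 : util (v i) p (A i) ≤ util (v i) p {x} := hxD' (A i)
      have heq1 : util (v i) p (A i) = util (v i) p {x} := le_antisymm h3 (h1.trans h2)
      have heq2 : util (v i) pstar (A i) = util (v i) p (A i) := le_antisymm h2 (by linarith)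
      have hAp : A i ∈ Demand (v i) p := by
        intro S
        calc util (v i) p S ≤ util (v i) p {x} := hxD' S
        _ = util (v i) p (A i) := heq1.symm
      obtain ⟨y, hy⟩ := hsmall (A i) hAp
      have hyO : y ∈ O := hall y (hy ▸ hAp)
      have hyp : pstar y = p y := by
        have := heq2
        unfold util at this
        rw [hy, Finset.sum_singleton, Finset.sum_singleton] at this
        linarith
      exact ⟨y, Finset.mem_filter.mpr ⟨hyO, hyp⟩, hy⟩
    -- build an injection from NO \ NO' into T
    set φ : Fin n → Ω := fun i =>
      if h : ∃ y, y ∈ T ∧ A i = {y} then h.choose else j with hφdef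
    have hφ : ∀ i ∈ NO \ NO', φ i ∈ T ∧ A i = {φ i} := by
      intro i hi
      have h := hkey i hi
      simp only [hφdef, dif_pos h]
      exact ⟨h.choose_spec.1, h.choose_spec.2⟩
    have hinj : Set.InjOn φ (NO \ NO') := by
      intro i hi i' hi' hii
      by_contra hne
      have hd := hdisj i i' hne
      rw [(hφ i hi).2, (hφ i' hi').2, hii] at hd
      simp at hd
    have hcard1 : (NO \ NO').ncard ≤ T.card := by
      have himg : φ '' (NO \ NO') ⊆ (T : Set Ω) := by
        rintro y ⟨i, hi, rfl⟩
        exact (hφ i hi).1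
      calc (NO \ NO').ncard = (φ '' (NO \ NO')).ncard :=
            (Set.ncard_image_of_injOn hinj).symm
        _ ≤ (T : Set Ω).ncard := Set.ncard_le_ncard himg (T.finite_toSet)
        _ = T.card := Set.ncard_coe_finset T
    -- counting from the minimality hypothesis
    have hmin := hOmin (O \ T) hssub
    unfold gOver at hmin
    rw [← hNO'def, ← hNOdef] at hmin
    have hOT : (O \ T).card = O.card - T.card := Finset.card_sdiff_of_subset hTsub
    have hTO : T.card ≤ O.card := Finset.card_le_card hTsub
    have hNle : NO'.ncard ≤ NO.ncard := Set.ncard_le_ncard hNsub (Set.toFinite _)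
    have hdiff : (NO \ NO').ncard = NO.ncard - NO'.ncard :=
      Set.ncard_diff hNsub (Set.toFinite _)
    rw [hOT] at hmin
    have hmin' : (NO'.ncard : ℤ) + T.card < NO.ncard := by
      have : ((O.card - T.card : ℕ) : ℤ) = (O.card : ℤ) - T.card := by
        push_cast [hTO]; ring
      rw [this] at hmin
      linarith
    have : (T.card : ℤ) < (NO \ NO').ncard := by
      rw [hdiff]
      push_cast [hNle]
      linarith
    have : (T.card : ℤ) < T.card := lt_of_lt_of_le this (by exact_mod_cast hcard1)
    exact absurd this (lt_irrefl _)
  · simp only [hjO, if_false, add_zero]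
    exact hle j
end
end

section
/- Let Ω = {a, b, c} and let v be the valuation with v(∅) = 0, v({a}) = v({b}) = 2, v({c}) = 4, and v(S) = 4 for every S ⊆ Ω with |S| ≥ 2. Then v belongs to GGS(2,4), but v is not gross substitute: for the price vector p with p(a) = 0, p(b) = 1, p(c) = 2, the set {a, b} belongs to D_v(p), but for the price vector q with q(a) = 2, q(b) = 1, q(c) = 2 (so q ≥ p and q(b) = p(b)) no set in D_v(q) contains b. -/
open Finset

noncomputable section

variable {Ω : Type*}

lemma util_additive {Ω : Type*} (w p : Ω → ℝ) (T : Finset Ω) :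
    util (fun S => ∑ j ∈ S, w j) p T = ∑ j ∈ T, (w j - p j) := by
  simp [util, Finset.sum_sub_distrib]

lemma additive_gs {Ω : Type*} [Fintype Ω] [DecidableEq Ω] (w : Ω → ℝ) :
    GrossSubstitute (fun S => ∑ j ∈ S, w j) := by
  intro p q _hp hpq S hS
  refine ⟨Finset.univ.filter (fun j => q j ≤ w j), ?_, ?_⟩
  · intro T
    rw [util_additive, util_additive]
    calc ∑ j ∈ T, (w j - q j)
        ≤ ∑ j ∈ T.filter (fun j => q j ≤ w j), (w j - q j) := by
          rw [← Finset.sum_filter_add_sum_filter_not T (fun j => q j ≤ w j)]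
          have h : ∑ j ∈ T.filter (fun j => ¬ q j ≤ w j), (w j - q j) ≤ 0 :=
            Finset.sum_nonpos (fun j hj => by
              simp only [Finset.mem_filter] at hj; linarith [hj.2])
          linarith
      _ ≤ ∑ j ∈ Finset.univ.filter (fun j => q j ≤ w j), (w j - q j) :=
          Finset.sum_le_sum_of_subset_of_nonneg
            (by intro j hj; simp only [Finset.mem_filter] at hj ⊢;
                exact ⟨Finset.mem_univ j, hj.2⟩)
            (fun j hj _ => by simp only [Finset.mem_filter] at hj; linarith [hj.2])
  · intro j hj hpq'
    have h1 := hS (S.erase j)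
    rw [util_additive, util_additive] at h1
    have h2 : ∑ k ∈ S, (w k - p k) = (w j - p j) + ∑ k ∈ S.erase j, (w k - p k) :=
      (Finset.add_sum_erase _ _ hj).symm
    have hpw : p j ≤ w j := by linarith
    simp only [Finset.mem_filter]
    exact ⟨Finset.mem_univ j, by rw [← hpq']; exact hpw⟩

lemma fin3_finset_cases (T : Finset (Fin 3)) :
    T = ∅ ∨ T = {0} ∨ T = {1} ∨ T = {2} ∨ T = {0, 1} ∨ T = {0, 2} ∨ T = {1, 2} ∨
      T = {0, 1, 2} := by revert T; decide

/-- a concrete `GGS(2,4)` valuation on three items `a = 0`, `b = 1`,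
`c = 2` that is not gross substitute. -/
theorem ggs2_not_gross_substitute (v : Finset (Fin 3) → ℝ)
    (h0 : v ∅ = 0) (ha : v {0} = 2) (hb : v {1} = 2) (hc : v {2} = 4)
    (hbig : ∀ S : Finset (Fin 3), 2 ≤ S.card → v S = 4) :
    GGS 2 4 v ∧ ¬ GrossSubstitute v ∧
    ({0, 1} : Finset (Fin 3)) ∈
      Demand v (fun j => if j = 0 then 0 else if j = 1 then 1 else 2) ∧
    (∀ S ∈ Demand v (fun j => if j = 0 then 2 else if j = 1 then 1 else 2),
      (1 : Fin 3) ∉ S) := by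
  have hab : v {0, 1} = 4 := hbig _ (by decide)
  have hac : v {0, 2} = 4 := hbig _ (by decide)
  have hbc : v {1, 2} = 4 := hbig _ (by decide)
  have habc : v {0, 1, 2} = 4 := hbig _ (by decide)
  set w : Fin 3 → ℝ := ![2, 2, 4] with hw
  have hwnn : ∀ j : Fin 3, (2:ℝ) ≤ w j := by
    intro j; fin_cases j <;> norm_num [hw]
  set p : Fin 3 → ℝ := fun j => if j = 0 then 0 else if j = 1 then 1 else 2 with hp
  set q : Fin 3 → ℝ := fun j => if j = 0 then 2 else if j = 1 then 1 else 2 with hq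
  have hDp : ({0, 1} : Finset (Fin 3)) ∈ Demand v p := by
    intro T
    rcases fin3_finset_cases T with rfl | rfl | rfl | rfl | rfl | rfl | rfl | rfl <;>
      simp [Demand, util, h0, ha, hb, hc, hab, hac, hbc, habc, hp] <;> norm_num
  have hDq : ∀ S ∈ Demand v q, (1 : Fin 3) ∉ S := by
    intro S hS h1S
    have key := hS {2}
    rcases fin3_finset_cases S with rfl | rfl | rfl | rfl | rfl | rfl | rfl | rfl <;>
      simp at h1S <;>
      simp [util, h0, ha, hb, hc, hab, hac, hbc, habc, hq] at key <;> norm_num at key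
  refine ⟨?_, ?_, hDp, hDq⟩
  · refine ⟨fun S => ∑ j ∈ S, w j, ⟨by simp, ?_⟩, additive_gs w, ?_, ?_⟩
    · intro S T hST
      exact Finset.sum_le_sum_of_subset_of_nonneg hST
        (fun j _ _ => by linarith [hwnn j])
    · intro S hS
      interval_cases hcard : S.card
      · rw [Finset.card_eq_zero.mp hcard]; simp [h0]
      · obtain ⟨x, hx⟩ := Finset.card_eq_one.mp hcard
        subst hx
        fin_cases x <;> simp [ha, hb, hc, hw] <;> norm_num
    · intro S hS
      refine ⟨hbig S hS, ?_⟩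
      obtain ⟨x, hxS, y, hyS, hxy⟩ := Finset.one_lt_card.mp hS
      have hsub : ({x, y} : Finset (Fin 3)) ⊆ S := by
        intro z hz; simp at hz; rcases hz with rfl | rfl <;> assumption
      calc (4:ℝ) ≤ w x + w y := by linarith [hwnn x, hwnn y]
        _ = ∑ j ∈ ({x, y} : Finset (Fin 3)), w j := (Finset.sum_pair hxy).symm
        _ ≤ ∑ j ∈ S, w j :=
            Finset.sum_le_sum_of_subset_of_nonneg hsub
              (fun j _ _ => by linarith [hwnn j])
  · intro hGS
    obtain ⟨S', hS', hcon⟩ := hGS p q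
      (by intro j; fin_cases j <;> simp [p])
      (by intro j; fin_cases j <;> simp [p, q])
      {0, 1} hDp
    exact hDq S' hS' (hcon 1 (by decide) (by norm_num [hp, hq]))
end
end
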